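/- (Exact λ-th moment of the multivariate Gaussian mechanism.) Let p ≥ 1, v, v' ∈ ℝ^p, and σ > 0. Let μ be the law of v + Z and ν the law of v' + Z, where Z has p independent coordinates each distributed N(0, σ²) (i.e., μ and ν are p-fold products of one-dimensional Gaussians translated by v and v'). Then μ ≪ ν and for every real λ > 0, ∫ (dμ/dν)^λ dμ = exp( λ(λ+1)·‖v − v'‖₂² / (2σ²) ). -/

import Mathlib

/-!
The density of `N(m, v)` with respect to `N(m', v)` is `exp ℓ` with
`ℓ t = ((t - m')² - (t - m)²) / (2v)` affine in `t`, so the product measures have the product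
density. The `λ`-th moment of the privacy loss is `∫ (dμ/dν)^(λ+1) dν`, which factorises over the
coordinates. In each coordinate, tilting `N(m', v)` by `exp (κ ℓ)` only shifts its mean to
`m' + κ (m - m')` and contributes the factor `exp (κ (κ - 1) (m - m')² / (2v))`; take `κ = λ + 1`.
-/

open MeasureTheory ProbabilityTheory Real
open scoped ENNReal NNReal

namespace MeasureTheory

variable {ι : Type*} [Fintype ι] {Ω : ι → Type*} [∀ i, MeasurableSpace (Ω i)]

theorem lintegral_fintype_prod_eq_prod (μ : ∀ i, Measure (Ω i)) [∀ i, IsProbabilityMeasure (μ i)]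
    {f : ∀ i, Ω i → ℝ≥0∞} (hf : ∀ i, Measurable (f i)) :
    ∫⁻ x, ∏ i, f i (x i) ∂Measure.pi μ = ∏ i, ∫⁻ t, f i t ∂μ i := by
  rw [lintegral_prod_eq_prod_lintegral_of_indepFun _ _
    (iIndepFun_pi fun i => (hf i).aemeasurable) fun i => (hf i).comp (measurable_pi_apply i)]
  exact Finset.prod_congr rfl fun i _ => (measurePreserving_eval μ i).lintegral_comp (hf i)

theorem Measure.pi_eq_withDensity_prod {μ ν : ∀ i, Measure (Ω i)} [∀ i, SigmaFinite (μ i)]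
    [∀ i, IsProbabilityMeasure (ν i)] {f : ∀ i, Ω i → ℝ≥0∞} (hf : ∀ i, Measurable (f i))
    (hμ : ∀ i, μ i = (ν i).withDensity (f i)) :
    Measure.pi μ = (Measure.pi ν).withDensity fun x => ∏ i, f i (x i) := by
  refine Measure.pi_eq fun s hs => ?_
  have hind : (Set.univ.pi s).indicator (fun x => ∏ i, f i (x i))
      = fun x => ∏ i, (s i).indicator (f i) (x i) := by
    ext x
    classical
    simp only [Set.indicator_apply, Finset.prod_ite_zero, Set.mem_univ_pi, Finset.mem_univ,
      true_implies]
  rw [withDensity_apply _ (.univ_pi hs), ← lintegral_indicator (.univ_pi hs), hind,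
    lintegral_fintype_prod_eq_prod _ fun i => (hf i).indicator (hs i)]
  exact Finset.prod_congr rfl fun i _ => by
    rw [lintegral_indicator (hs i), hμ i, withDensity_apply _ (hs i)]

theorem lintegral_rnDeriv_rpow_withDensity {α : Type*} [MeasurableSpace α] (ν : Measure α)
    [SigmaFinite ν] {f : α → ℝ≥0∞} (hf : Measurable f) {r : ℝ} (hr : 0 ≤ r) :
    ∫⁻ x, (ν.withDensity f).rnDeriv ν x ^ r ∂ν.withDensity f = ∫⁻ x, f x ^ (r + 1) ∂ν := by
  have hrn := (Measure.rnDeriv_withDensity ν hf).filter_mono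
    (withDensity_absolutelyContinuous ν f).ae_le
  rw [lintegral_congr_ae (hrn.mono fun x hx => by rw [hx]),
    lintegral_withDensity_eq_lintegral_mul _ hf (hf.pow_const r)]
  congr 1 with x
  rw [Pi.mul_apply, ENNReal.rpow_add_of_nonneg _ _ hr zero_le_one, ENNReal.rpow_one, mul_comm]

end MeasureTheory

/-- `log (dN(m, v)/dN(m', v))`, the privacy loss of the one-dimensional Gaussian mechanism. -/
noncomputable def gaussianLogLikelihoodRatio (m m' : ℝ) (v : ℝ≥0) (t : ℝ) : ℝ :=
  ((t - m') ^ 2 - (t - m) ^ 2) / (2 * v)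

@[fun_prop]
theorem measurable_gaussianLogLikelihoodRatio (m m' : ℝ) (v : ℝ≥0) :
    Measurable (gaussianLogLikelihoodRatio m m' v) := by
  unfold gaussianLogLikelihoodRatio; fun_prop

theorem gaussianPDF_mul_exp_gaussianLogLikelihoodRatio (m m' : ℝ) (v : ℝ≥0) (κ t : ℝ) :
    gaussianPDF m' v t * ENNReal.ofReal (rexp (κ * gaussianLogLikelihoodRatio m m' v t))
      = ENNReal.ofReal (rexp (κ * (κ - 1) * (m - m') ^ 2 / (2 * v)))
        * gaussianPDF (m' + κ * (m - m')) v t := by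
  rw [gaussianPDF, gaussianPDF, ← ENNReal.ofReal_mul (gaussianPDFReal_nonneg _ _ _),
    ← ENNReal.ofReal_mul (exp_pos _).le, gaussianPDFReal, gaussianPDFReal, mul_assoc, ← exp_add,
    mul_left_comm, ← exp_add, gaussianLogLikelihoodRatio]
  congr 3
  field_simp
  ring

theorem gaussianReal_eq_withDensity (m m' : ℝ) {v : ℝ≥0} (hv : v ≠ 0) :
    gaussianReal m v
      = (gaussianReal m' v).withDensity fun t =>
          ENNReal.ofReal (rexp (gaussianLogLikelihoodRatio m m' v t)) := by
  rw [gaussianReal_of_var_ne_zero _ hv, gaussianReal_of_var_ne_zero _ hv,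
    ← withDensity_mul _ (measurable_gaussianPDF _ _) (by fun_prop)]
  congr 1 with t
  simpa using (gaussianPDF_mul_exp_gaussianLogLikelihoodRatio m m' v 1 t).symm

theorem lintegral_exp_mul_gaussianLogLikelihoodRatio (m m' : ℝ) {v : ℝ≥0} (hv : v ≠ 0) (κ : ℝ) :
    ∫⁻ t, ENNReal.ofReal (rexp (κ * gaussianLogLikelihoodRatio m m' v t)) ∂gaussianReal m' v
      = ENNReal.ofReal (rexp (κ * (κ - 1) * (m - m') ^ 2 / (2 * v))) := by
  rw [gaussianReal_of_var_ne_zero _ hv,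
    lintegral_withDensity_eq_lintegral_mul _ (measurable_gaussianPDF _ _) (by fun_prop)]
  simp only [Pi.mul_apply, gaussianPDF_mul_exp_gaussianLogLikelihoodRatio]
  rw [lintegral_const_mul _ (measurable_gaussianPDF _ _), lintegral_gaussianPDF_eq_one _ hv,
    mul_one]

section GaussianPi

variable {ι : Type*} [Fintype ι] (m m' : ι → ℝ) {v : ℝ≥0}

theorem pi_gaussianReal_eq_withDensity (hv : v ≠ 0) :
    Measure.pi (fun i => gaussianReal (m i) v)
      = (Measure.pi fun i => gaussianReal (m' i) v).withDensity fun x =>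
          ENNReal.ofReal (rexp (∑ i, gaussianLogLikelihoodRatio (m i) (m' i) v (x i))) := by
  simp_rw [exp_sum, ENNReal.ofReal_prod_of_nonneg fun i _ => (exp_pos _).le]
  exact Measure.pi_eq_withDensity_prod
    (f := fun i t => ENNReal.ofReal (rexp (gaussianLogLikelihoodRatio (m i) (m' i) v t)))
    (fun i => by fun_prop) fun i => gaussianReal_eq_withDensity (m i) (m' i) hv

theorem lintegral_exp_mul_sum_gaussianLogLikelihoodRatio (hv : v ≠ 0) (κ : ℝ) :
    ∫⁻ x, ENNReal.ofReal (rexp (κ * ∑ i, gaussianLogLikelihoodRatio (m i) (m' i) v (x i)))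
        ∂Measure.pi (fun i => gaussianReal (m' i) v)
      = ENNReal.ofReal (rexp (κ * (κ - 1) * (∑ i, (m i - m' i) ^ 2) / (2 * v))) := by
  simp_rw [Finset.mul_sum, exp_sum, ENNReal.ofReal_prod_of_nonneg fun i _ => (exp_pos _).le]
  rw [lintegral_fintype_prod_eq_prod (Ω := fun _ => ℝ) _
    (f := fun i t => ENNReal.ofReal (rexp (κ * gaussianLogLikelihoodRatio (m i) (m' i) v t)))
    fun i => by fun_prop]
  simp_rw [lintegral_exp_mul_gaussianLogLikelihoodRatio _ _ hv]
  rw [← ENNReal.ofReal_prod_of_nonneg fun i _ => (exp_pos _).le, ← exp_sum, Finset.sum_div]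

end GaussianPi

theorem gaussian_pi_moment_eq_general
    (p : ℕ) (v v' : Fin p → ℝ) (σ : ℝ) (hσ : 0 < σ) :
    (Measure.pi fun i => gaussianReal (v i) ((σ ^ 2).toNNReal)) ≪
        (Measure.pi fun i => gaussianReal (v' i) ((σ ^ 2).toNNReal)) ∧
      ∀ lam : ℝ, 0 < lam →
        ∫⁻ x, ((Measure.pi fun i => gaussianReal (v i) ((σ ^ 2).toNNReal)).rnDeriv
            (Measure.pi fun i => gaussianReal (v' i) ((σ ^ 2).toNNReal)) x) ^ lam
          ∂(Measure.pi fun i => gaussianReal (v i) ((σ ^ 2).toNNReal))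
        = ENNReal.ofReal
            (Real.exp (lam * (lam + 1) * (∑ i, (v i - v' i) ^ 2) / (2 * σ ^ 2))) := by
  have hV : (σ ^ 2).toNNReal ≠ 0 := (Real.toNNReal_pos.mpr (by positivity)).ne'
  have hpi := pi_gaussianReal_eq_withDensity v v' hV
  refine ⟨hpi ▸ withDensity_absolutelyContinuous _ _, fun lam hlam => ?_⟩
  rw [hpi, lintegral_rnDeriv_rpow_withDensity _ (by fun_prop) hlam.le]
  simp_rw [ENNReal.ofReal_rpow_of_pos (exp_pos _), ← exp_mul, mul_comm _ (lam + 1)]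
  rw [lintegral_exp_mul_sum_gaussianLogLikelihoodRatio _ _ hV,
    Real.coe_toNNReal _ (sq_nonneg σ), add_sub_cancel_right, mul_comm (lam + 1) lam]

/-- Exact λ-th moment of the multivariate Gaussian mechanism: for `μ, ν` the `p`-fold
products of one-dimensional Gaussians `N(v i, σ²)` and `N(v' i, σ²)` respectively,
`μ ≪ ν` and `∫ (dμ/dν)^λ dμ = exp(λ(λ+1)‖v - v'‖₂²/(2σ²))` for all `λ > 0`,
where `‖v - v'‖₂² = ∑ i, (v i - v' i)²`. -/
theorem gaussian_pi_moment_eq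
    (p : ℕ) (hp : 1 ≤ p) (v v' : Fin p → ℝ) (σ : ℝ) (hσ : 0 < σ) :
    (Measure.pi fun i => gaussianReal (v i) ((σ ^ 2).toNNReal)) ≪
        (Measure.pi fun i => gaussianReal (v' i) ((σ ^ 2).toNNReal)) ∧
      ∀ lam : ℝ, 0 < lam →
        ∫⁻ x, ((Measure.pi fun i => gaussianReal (v i) ((σ ^ 2).toNNReal)).rnDeriv
            (Measure.pi fun i => gaussianReal (v' i) ((σ ^ 2).toNNReal)) x) ^ lam
          ∂(Measure.pi fun i => gaussianReal (v i) ((σ ^ 2).toNNReal))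
        = ENNReal.ofReal
            (Real.exp (lam * (lam + 1) * (∑ i, (v i - v' i) ^ 2) / (2 * σ ^ 2))) :=
  gaussian_pi_moment_eq_general p v v' σ hσ
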